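/- arXiv:1010.1365 — 7 statements merged into one kernel-verified Lean document; each statement's English description precedes it below -/
import Mathlib

section
/- Let q be a positive integer and let G be a bipartite graph with vertex bipartition A ⊎ B such that B has no isolated vertices. If |B| > m·q, where m is the size of a maximum matching in G, then there exist nonempty sets S ⊆ A and T ⊆ B such that (1) there exist q pairwise edge-disjoint matchings in G[S ∪ T], each saturating S, and (2) every neighbor of a vertex of T lies in S. -/
/-! Pick `Z ⊆ B` maximising the `q`-deficiency `|Z| - q|N(Z)|`. It is positive: otherwise Hall's
theorem, with `q` copies of every vertex, gives each `b ∈ B` its own pair (neighbour, copy), and by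
pigeonhole the pairs using one copy form a matching with more than `m` edges. Maximality gives
`q|Y| ≤ |Z ∩ N(Y)|` for every `Y ⊆ N(Z)`, since otherwise deleting `Z ∩ N(Y)` from `Z` would increase
the deficiency. Hall's theorem with `q` copies of each vertex of `S = N(Z)` then yields `q`
edge-disjoint matchings of `S` into `T = Z`. -/

open Function

namespace Finset

variable {ι α : Type*} [DecidableEq α]

theorem exists_injective_prod_fin_of_mul_card_le (t : ι → Finset α) (q : ℕ)
    (h : ∀ s : Finset ι, q * #s ≤ #(s.biUnion t)) :
    ∃ f : ι × Fin q → α, Injective f ∧ ∀ x, f x ∈ t x.1 := by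
  classical
  refine (all_card_le_biUnion_card_iff_exists_injective _).mp fun s => ?_
  calc #s ≤ #(s.image Prod.fst ×ˢ (univ : Finset (Fin q))) :=
        card_le_card fun x hx => mem_product.mpr ⟨mem_image_of_mem _ hx, mem_univ _⟩
    _ = q * #(s.image Prod.fst) := by simp [mul_comm]
    _ ≤ #((s.image Prod.fst).biUnion t) := h _
    _ = #(s.biUnion fun x => t x.1) := by rw [image_biUnion]

theorem exists_injective_prod_fin_of_card_le_mul (t : ι → Finset α) (q : ℕ)
    (h : ∀ s : Finset ι, #s ≤ q * #(s.biUnion t)) :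
    ∃ f : ι → α × Fin q, Injective f ∧ ∀ x, (f x).1 ∈ t x := by
  have hall (s : Finset ι) : #s ≤ #(s.biUnion fun x => t x ×ˢ (univ : Finset (Fin q))) := by
    have : (s.biUnion fun x => t x ×ˢ (univ : Finset (Fin q))) = s.biUnion t ×ˢ univ := by
      ext; simp
    rw [this, card_product, card_univ, Fintype.card_fin, mul_comm]
    exact h s
  obtain ⟨f, hf, hft⟩ := (all_card_le_biUnion_card_iff_exists_injective _).mp hall
  exact ⟨f, hf, fun x => (mem_product.mp (hft x)).1⟩

end Finset

namespace SimpleGraph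

variable {V ι : Type*} {G : SimpleGraph V}

open Set in
theorem Subgraph.exists_isMatching_of_injective {e f : ι → V} (hadj : ∀ i, G.Adj (e i) (f i))
    (he : Injective e) (hf : Injective f) (hef : Disjoint (range e) (range f)) :
    ∃ M : G.Subgraph, M.IsMatching ∧ M.verts = range e ∪ range f ∧
      M.edgeSet = range fun i => s(e i, f i) := by
  refine ⟨⨆ i, G.subgraphOfAdj (hadj i), IsMatching.iSup (fun i => .subgraphOfAdj _) ?_, ?_, ?_⟩
  · intro i j hij
    simp only [support_subgraphOfAdj, disjoint_insert_left, disjoint_insert_right,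
      disjoint_singleton, mem_insert_iff, mem_singleton_iff, not_or]
    exact ⟨⟨(he.ne hij).symm, hef.ne_of_mem (mem_range_self j) (mem_range_self i)⟩,
      hef.ne_of_mem (mem_range_self i) (mem_range_self j), hf.ne hij⟩
  · ext v
    simp only [verts_iSup, subgraphOfAdj_verts, mem_iUnion, mem_insert_iff, mem_singleton_iff,
      mem_union, mem_range]
    grind
  · ext e
    simp [edgeSet_iSup]

open Set in
theorem injective_sym2_mk_of_disjoint_range {e f : ι → V} (he : Injective e)
    (hef : Disjoint (range e) (range f)) : Injective fun i => s(e i, f i) := by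
  intro i j hij
  rcases Sym2.eq_iff.mp hij with ⟨h, -⟩ | ⟨h, -⟩
  · exact he h
  · exact absurd h (hef.ne_of_mem (mem_range_self i) (mem_range_self j))

open Finset

variable [Fintype V]

variable (G) in
open Classical in
noncomputable def nbhdFinset (Z : Finset V) : Finset V := {a | ∃ z ∈ Z, G.Adj z a}

@[simp]
theorem mem_nbhdFinset {Z : Finset V} {a : V} : a ∈ G.nbhdFinset Z ↔ ∃ z ∈ Z, G.Adj z a := by
  simp [nbhdFinset]

theorem nbhdFinset_image [DecidableEq V] [DecidableEq ι] (s : Finset ι) (e : ι → V) :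
    G.nbhdFinset (s.image e) = s.biUnion fun i => G.nbhdFinset {e i} := by
  ext; simp

variable (G) in
noncomputable def deficiency (q : ℕ) (Z : Finset V) : ℤ := #Z - q * #(G.nbhdFinset Z)

@[simp]
theorem deficiency_empty {q : ℕ} : G.deficiency q ∅ = 0 := by
  simp [deficiency, eq_empty_iff_forall_notMem]

theorem exists_deficiency_pos_of_mul_lt_card [DecidableEq V] {B : Finset V} {q m : ℕ} (hB : G.IsIndepSet B)
    (hm : ∀ M : G.Subgraph, M.IsMatching → M.edgeSet.ncard ≤ m) (hcard : m * q < #B) :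
    ∃ Z ⊆ B, 0 < G.deficiency q Z := by
  by_contra! hZ
  obtain ⟨f, hf, hfN⟩ := exists_injective_prod_fin_of_card_le_mul
      (fun b : B => G.nbhdFinset {b.1}) q fun s => by
    have := hZ (s.image Subtype.val) (by simp [image_subset_iff])
    rw [deficiency, card_image_of_injective _ Subtype.val_injective, nbhdFinset_image] at this
    omega
  obtain ⟨i, -, hi⟩ := exists_lt_card_fiber_of_mul_lt_card_of_maps_to
    (s := univ) (t := univ) (f := fun b => (f b).2) (fun _ _ => mem_univ _)
    (by simpa [mul_comm] using hcard)
  let e (b : {b : B // (f b).2 = i}) : V := b.1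
  let g (b : {b : B // (f b).2 = i}) : V := (f b.1).1
  have hadj (b) : G.Adj (e b) (g b) := by simpa using hfN b.1
  have he : Injective e := fun b c h => Subtype.ext (Subtype.ext h)
  have hg : Injective g := fun b c h => Subtype.ext (hf (Prod.ext h (b.2.trans c.2.symm)))
  have heg : Disjoint (Set.range e) (Set.range g) := by
    rw [Set.disjoint_left]
    rintro _ ⟨b, rfl⟩ ⟨c, hc⟩
    exact hB c.1.2 (by rw [hc]; exact b.1.2) (hadj c).ne (hadj c)
  obtain ⟨M, hM, -, hME⟩ := Subgraph.exists_isMatching_of_injective hadj he hg heg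
  have := hm M hM
  rw [hME, Set.ncard_range_of_injective (injective_sym2_mk_of_disjoint_range he heg),
    Nat.card_eq_fintype_card, Fintype.card_subtype] at this
  omega

theorem mul_card_le_card_inter_nbhdFinset [DecidableEq V] {q : ℕ} {Z Y : Finset V}
    (hZ : ∀ Z' ⊆ Z, G.deficiency q Z' ≤ G.deficiency q Z) (hY : Y ⊆ G.nbhdFinset Z) :
    q * #Y ≤ #(Z ∩ G.nbhdFinset Y) := by
  set W := Z ∩ G.nbhdFinset Y
  have hN : G.nbhdFinset (Z \ W) ⊆ G.nbhdFinset Z \ Y := by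
    intro a
    simp only [mem_nbhdFinset, mem_sdiff, mem_inter, W]
    rintro ⟨z, ⟨hz, hzY⟩, hza⟩
    exact ⟨⟨z, hz, hza⟩, fun haY => hzY ⟨hz, a, haY, hza.symm⟩⟩
  have h₁ := hZ (Z \ W) sdiff_subset
  have h₂ : q * #(G.nbhdFinset (Z \ W)) ≤ q * #(G.nbhdFinset Z \ Y) :=
    Nat.mul_le_mul_left q (card_le_card hN)
  have hZW := card_sdiff_add_card_eq_card (inter_subset_left : W ⊆ Z)
  have hNY := card_sdiff_add_card_eq_card hY
  rw [deficiency, deficiency, ← hZW, ← hNY] at h₁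
  push_cast at h₁
  zify at h₂
  linarith

theorem exists_edgeDisjoint_matchings_of_mul_card_le [DecidableEq V] {q : ℕ} {S T : Finset V}
    (hST : Disjoint S T) (hall : ∀ Y ⊆ S, q * #Y ≤ #(T ∩ G.nbhdFinset Y)) :
    ∃ Ms : Fin q → G.Subgraph,
      (∀ i, (Ms i).IsMatching ∧ (Ms i).verts ⊆ ↑S ∪ ↑T ∧ ↑S ⊆ (Ms i).support) ∧
      Pairwise fun i j => Disjoint (Ms i).edgeSet (Ms j).edgeSet := by
  obtain ⟨g, hg, hgN⟩ := exists_injective_prod_fin_of_mul_card_le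
      (fun a : S => T ∩ G.nbhdFinset {a.1}) q fun s => by
    rw [← inter_biUnion, ← nbhdFinset_image, ← card_image_of_injective s Subtype.val_injective]
    exact hall _ (by simp [image_subset_iff])
  have hgT (x : S × Fin q) : g x ∈ T := (mem_inter.mp (hgN x)).1
  have hadj (x : S × Fin q) : G.Adj x.1 (g x) := by simpa using (mem_inter.mp (hgN x)).2
  have hdisj (i : Fin q) : Disjoint (Set.range fun a : S => a.1) (Set.range fun a => g (a, i)) := by
    rw [Set.disjoint_left]
    rintro _ ⟨a, rfl⟩ ⟨b, hb : g (b, i) = a⟩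
    exact Finset.disjoint_left.mp hST a.2 (hb ▸ hgT (b, i))
  choose Ms hM hV hE using fun i => Subgraph.exists_isMatching_of_injective
    (fun a => hadj (a, i)) Subtype.val_injective (hg.comp (Prod.mk_left_injective i)) (hdisj i)
  refine ⟨Ms, fun i => ⟨hM i, ?_, fun a ha => ?_⟩, fun i j hij => ?_⟩
  · rw [hV i]
    rintro _ (⟨a, rfl⟩ | ⟨a, rfl⟩)
    exacts [Or.inl a.2, Or.inr (hgT _)]
  · rw [Subgraph.mem_support]
    refine ⟨g (⟨a, ha⟩, i), ?_⟩
    rw [← Subgraph.mem_edgeSet, hE i]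
    exact ⟨⟨a, ha⟩, rfl⟩
  · simp only [hE, Set.disjoint_left]
    rintro _ ⟨a, rfl⟩ ⟨b, hb⟩
    rcases Sym2.eq_iff.mp hb with ⟨-, h⟩ | ⟨h, -⟩
    · exact hij (congrArg Prod.snd (hg h)).symm
    · exact Finset.disjoint_left.mp hST b.2 (by rw [h]; exact hgT _)

theorem exists_nonempty_maximal_deficiency {q : ℕ} {B : Finset V}
    (hB : ∃ Z ⊆ B, 0 < G.deficiency q Z) :
    ∃ Z ⊆ B, Z.Nonempty ∧ ∀ Z' ⊆ B, G.deficiency q Z' ≤ G.deficiency q Z := by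
  obtain ⟨Z₀, hZ₀B, hZ₀⟩ := hB
  obtain ⟨Z, hZB, hZmax⟩ :=
    exists_max_image B.powerset (G.deficiency q) ⟨Z₀, mem_powerset.mpr hZ₀B⟩
  simp only [mem_powerset] at hZB hZmax
  refine ⟨Z, hZB, nonempty_iff_ne_empty.mpr ?_, hZmax⟩
  rintro rfl
  exact (hZ₀.trans_le (hZmax Z₀ hZ₀B)).ne' G.deficiency_empty

end SimpleGraph

theorem expansion_lemma_general {V : Type} [Fintype V]
    (G : SimpleGraph V) (A B : Set V) (q m : ℕ)
    (hdisj : Disjoint A B)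
    (hbip : ∀ u v, G.Adj u v → (u ∈ A ∧ v ∈ B) ∨ (u ∈ B ∧ v ∈ A))
    (hnoiso : ∀ b ∈ B, ∃ a, G.Adj b a)
    (hm : ∀ M : G.Subgraph, M.IsMatching → M.edgeSet.ncard ≤ m)
    (hB : m * q < B.ncard) :
    ∃ S T : Set V, S ⊆ A ∧ T ⊆ B ∧ S.Nonempty ∧ T.Nonempty ∧
      (∃ Ms : Fin q → G.Subgraph,
        (∀ i, (Ms i).IsMatching ∧ (Ms i).verts ⊆ S ∪ T ∧ S ⊆ (Ms i).support) ∧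
        ∀ i j, i ≠ j → Disjoint (Ms i).edgeSet (Ms j).edgeSet) ∧
      (∀ t ∈ T, ∀ u, G.Adj t u → u ∈ S) := by
  classical
  have hBA (b : V) (hb : b ∈ B) (a : V) (hba : G.Adj b a) : a ∈ A :=
    ((hbip b a hba).resolve_left fun h => Set.disjoint_left.mp hdisj h.1 hb).2
  have hindep : G.IsIndepSet ↑B.toFinset := fun b hb a ha _ hba =>
    Set.disjoint_left.mp hdisj (hBA b (by simpa using hb) a hba) (by simpa using ha)
  obtain ⟨Z, hZB, ⟨z, hz⟩, hZmax⟩ := G.exists_nonempty_maximal_deficiency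
    (G.exists_deficiency_pos_of_mul_lt_card hindep hm (by rwa [← Set.ncard_eq_toFinset_card']))
  have hZB' : ↑Z ⊆ B := fun z hz => by simpa using hZB hz
  have hSA : ↑(G.nbhdFinset Z) ⊆ A := fun a ha => by
    obtain ⟨z, hz, hza⟩ := SimpleGraph.mem_nbhdFinset.mp ha
    exact hBA z (hZB' hz) a hza
  obtain ⟨Ms, hMs, hMs_disj⟩ := G.exists_edgeDisjoint_matchings_of_mul_card_le
    (Finset.disjoint_coe.mp (hdisj.mono hSA hZB'))
    fun Y hY => G.mul_card_le_card_inter_nbhdFinset (fun Z' hZ' => hZmax Z' (hZ'.trans hZB)) hY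
  obtain ⟨a, hza⟩ := hnoiso z (hZB' hz)
  exact ⟨_, _, hSA, hZB', ⟨a, SimpleGraph.mem_nbhdFinset.mpr ⟨z, hz, hza⟩⟩, ⟨z, hz⟩,
    ⟨Ms, hMs, fun i j hij => hMs_disj hij⟩,
    fun t ht u htu => SimpleGraph.mem_nbhdFinset.mpr ⟨t, ht, htu⟩⟩

/-- The q-Expansion Lemma. -/
theorem expansion_lemma {V : Type} [Fintype V] [DecidableEq V]
    (G : SimpleGraph V) (A B : Set V) (q m : ℕ) (hq : 0 < q)
    (hpart : ∀ v : V, v ∈ A ∨ v ∈ B) (hdisj : Disjoint A B)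
    (hbip : ∀ u v, G.Adj u v → (u ∈ A ∧ v ∈ B) ∨ (u ∈ B ∧ v ∈ A))
    (hnoiso : ∀ b ∈ B, ∃ a, G.Adj b a)
    (hmax : ∃ M : G.Subgraph, M.IsMatching ∧ M.edgeSet.ncard = m)
    (hm : ∀ M : G.Subgraph, M.IsMatching → M.edgeSet.ncard ≤ m)
    (hB : m * q < B.ncard) :
    ∃ S T : Set V, S ⊆ A ∧ T ⊆ B ∧ S.Nonempty ∧ T.Nonempty ∧
      (∃ Ms : Fin q → G.Subgraph,
        (∀ i, (Ms i).IsMatching ∧ (Ms i).verts ⊆ S ∪ T ∧ S ⊆ (Ms i).support) ∧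
        ∀ i j, i ≠ j → Disjoint (Ms i).edgeSet (Ms j).edgeSet) ∧
      (∀ t ∈ T, ∀ u, G.Adj t u → u ∈ S) :=
  expansion_lemma_general G A B q m hdisj hbip hnoiso hm hB
end

section
/- Let θ_c denote the multigraph consisting of two vertices joined by c parallel edges, with c ≥ 2. If M is a minimal minor-model of θ_c in a graph G, then M is connected and has no cut vertex, i.e., deleting any single vertex of M leaves a connected graph. -/
/-- `G` contains θ_c (two vertices joined by `c` parallel edges) as a minor. -/
def HasThetaMinor {V : Type} (G : SimpleGraph V) (c : ℕ) : Prop :=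
  ∃ A B : Set V, A.Nonempty ∧ B.Nonempty ∧ Disjoint A B ∧
    (G.induce A).Connected ∧ (G.induce B).Connected ∧
    ∃ E : Finset (V × V), E.card = c ∧ ∀ e ∈ E, e.1 ∈ A ∧ e.2 ∈ B ∧ G.Adj e.1 e.2

/-- `M` is a minimal minor-model of θ_c in `G`. -/
def IsMinimalThetaModel {V : Type} (G : SimpleGraph V) (c : ℕ) (M : G.Subgraph) : Prop :=
  HasThetaMinor M.coe c ∧ ∀ M' : G.Subgraph, M' < M → ¬ HasThetaMinor M'.coe c

/-!
Fix a θ_c-model `(A, B, E)` in `M`. Minimality forces `A ∪ B` to be all of `M`, so `M` is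
connected. For a vertex `v ∈ A`, let `C` be the union of the components of `A - v` containing no
endpoint of an edge of `E`. Every such component hangs off `v`, so `A \ C` is still connected and
`(A \ C, B, E)` is again a θ_c-model; hence `C = ∅`. So every vertex of `M - v` reaches an edge
of `E` inside `A - v`, and through it the connected set `B`, which avoids `v`.
-/

open Set Function

namespace SimpleGraph

variable {U U' : Type*} {K : SimpleGraph U} {K' : SimpleGraph U'}

lemma Preconnected.of_surjective_of_adj_reachable (hK : K.Preconnected) (f : U → U')
    (hf : Surjective f) (hadj : ∀ x y, K.Adj x y → K'.Reachable (f x) (f y)) :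
    K'.Preconnected := by
  refine hf.forall₂.2 fun x y => ?_
  obtain ⟨p⟩ := hK x y
  induction p with
  | nil => rfl
  | cons h _ ih => exact (hadj _ _ h).trans ih

lemma induce_diff_connected_of_adj_mem_or_eq {A C : Set U} {v : U}
    (hA : (K.induce A).Connected) (hvA : v ∈ A) (hvC : v ∉ C)
    (hC : ∀ x ∈ C, ∀ y ∈ A, K.Adj x y → y ∈ C ∨ y = v) : (K.induce (A \ C)).Connected := by
  classical
  -- collapsing `C` onto `v` sends every edge of `A` to an edge or a loop of `A \ C`
  let r : A → ↥(A \ C) := fun x => if hx : ↑x ∈ C then ⟨v, hvA, hvC⟩ else ⟨x, x.2, hx⟩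
  have hr : ∀ x : A, ↑x ∉ C → (r x : U) = x := fun x hx => by simp [r, hx]
  have hrC : ∀ x : A, ↑x ∈ C → (r x : U) = v := fun x hx => by simp [r, hx]
  have : Nonempty ↥(A \ C) := ⟨⟨v, hvA, hvC⟩⟩
  refine ⟨hA.preconnected.of_surjective_of_adj_reachable r
    (fun y => ⟨⟨y, y.2.1⟩, Subtype.ext (hr _ y.2.2)⟩) fun x y hxy => ?_⟩
  by_cases hx : ↑x ∈ C <;> by_cases hy : ↑y ∈ C
  · rw [Subtype.ext ((hrC x hx).trans (hrC y hy).symm)]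
  · have hyv := (hC x hx y y.2 hxy).resolve_left hy
    rw [Subtype.ext ((hrC x hx).trans ((hr y hy).trans hyv).symm)]
  · have hxv := (hC y hy x x.2 hxy.symm).resolve_left hx
    rw [Subtype.ext (((hr x hx).trans hxv).trans (hrC y hy).symm)]
  · refine Adj.reachable ?_
    simpa [induce_adj, hr x hx, hr y hy] using hxy

noncomputable def Embedding.inducePreimageIso (f : K ↪g K') {A : Set U'} (hA : A ⊆ range f) :
    K.induce (f ⁻¹' A) ≃g K'.induce A where
  toEquiv := Equiv.ofBijective (fun x => ⟨f x, x.2⟩)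
    ⟨fun x y h => Subtype.ext (f.injective (congrArg Subtype.val h)), fun y => by
      obtain ⟨x, hx⟩ := hA y.2
      exact ⟨⟨x, by simp [hx]⟩, Subtype.ext hx⟩⟩
  map_rel_iff' := f.map_adj_iff

namespace Subgraph

variable {V : Type*} {G : SimpleGraph V}

def induceEmbedding (M : G.Subgraph) {S : Set V} (hS : S ⊆ M.verts) :
    (M.induce S).coe ↪g M.coe where
  toFun x := ⟨x, hS x.2⟩
  inj' _ _ h := Subtype.ext (Subtype.mk.inj h)
  map_rel_iff' {x y} := ⟨fun h => ⟨x.2, y.2, h⟩, fun h => h.2.2⟩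

lemma range_induceEmbedding (M : G.Subgraph) {S : Set V} (hS : S ⊆ M.verts) :
    range (M.induceEmbedding hS) = Subtype.val ⁻¹' S := by
  ext x
  exact ⟨by rintro ⟨y, rfl⟩; exact y.2, fun hx => ⟨⟨x, hx⟩, rfl⟩⟩

end Subgraph

end SimpleGraph

open SimpleGraph

structure IsThetaModel {W : Type*} (H : SimpleGraph W) (c : ℕ) (A B : Set W)
    (E : Finset (W × W)) : Prop where
  left_nonempty : A.Nonempty
  right_nonempty : B.Nonempty
  disjoint : Disjoint A B
  left_connected : (H.induce A).Connected
  right_connected : (H.induce B).Connected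
  card_edges : E.card = c
  mem_edges : ∀ e ∈ E, e.1 ∈ A ∧ e.2 ∈ B ∧ H.Adj e.1 e.2

def ThetaModelsSpan {W : Type*} (H : SimpleGraph W) (c : ℕ) : Prop :=
  ∀ A B E, IsThetaModel H c A B E → A ∪ B = univ

lemma hasThetaMinor_iff {W : Type} {H : SimpleGraph W} {c : ℕ} :
    HasThetaMinor H c ↔ ∃ A B E, IsThetaModel H c A B E :=
  ⟨fun ⟨A, B, hA, hB, hd, hAc, hBc, E, hEc, hE⟩ => ⟨A, B, E, ⟨hA, hB, hd, hAc, hBc, hEc, hE⟩⟩,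
    fun ⟨A, B, E, h⟩ => ⟨A, B, h.1, h.2, h.3, h.4, h.5, E, h.6, h.7⟩⟩

lemma IsThetaModel.comap {W W' : Type} {H : SimpleGraph W} {H' : SimpleGraph W'} {c : ℕ}
    {A B : Set W} {E : Finset (W × W)} (h : IsThetaModel H c A B E) (f : H' ↪g H)
    (hA : A ⊆ range f) (hB : B ⊆ range f) : HasThetaMinor H' c := by
  classical
  have hinj : Injective (Prod.map f f) := f.injective.prodMap f.injective
  refine ⟨f ⁻¹' A, f ⁻¹' B, ?_, ?_, h.disjoint.preimage f,
    (f.inducePreimageIso hA).connected_iff.2 h.left_connected,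
    (f.inducePreimageIso hB).connected_iff.2 h.right_connected,
    E.preimage (Prod.map f f) hinj.injOn, ?_, fun e he => ?_⟩
  · obtain ⟨a, ha⟩ := h.left_nonempty
    obtain ⟨x, rfl⟩ := hA ha
    exact ⟨x, ha⟩
  · obtain ⟨b, hb⟩ := h.right_nonempty
    obtain ⟨x, rfl⟩ := hB hb
    exact ⟨x, hb⟩
  · rw [Finset.card_preimage, Finset.filter_true_of_mem, h.card_edges]
    intro e he
    obtain ⟨h1, h2, -⟩ := h.mem_edges e he
    obtain ⟨x, hx⟩ := hA h1
    obtain ⟨y, hy⟩ := hB h2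
    exact ⟨(x, y), Prod.ext hx hy⟩
  · obtain ⟨h1, h2, hadj⟩ := h.mem_edges _ (Finset.mem_preimage.1 he)
    exact ⟨h1, h2, f.map_adj_iff.1 hadj⟩

section

variable {W : Type*} {H : SimpleGraph W} {c : ℕ} {A B : Set W} {E : Finset (W × W)} {v : W}

namespace IsThetaModel

lemma symm (h : IsThetaModel H c A B E) :
    IsThetaModel H c B A (E.map (Equiv.prodComm W W).toEmbedding) where
  left_nonempty := h.right_nonempty
  right_nonempty := h.left_nonempty
  disjoint := h.disjoint.symm
  left_connected := h.right_connected
  right_connected := h.left_connected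
  card_edges := by rw [Finset.card_map, h.card_edges]
  mem_edges := by
    simp only [Finset.forall_mem_map]
    intro e he
    obtain ⟨h1, h2, hadj⟩ := h.mem_edges e he
    exact ⟨h2, h1, hadj.symm⟩

lemma connected_of_union_eq_univ (h : IsThetaModel H c A B E) (hAB : A ∪ B = univ)
    (hc : c ≠ 0) : H.Connected := by
  obtain ⟨e, he⟩ := Finset.card_ne_zero.1 (h.card_edges ▸ hc)
  obtain ⟨h1, h2, hadj⟩ := h.mem_edges e he
  have := connected_induce_union h.left_connected.preconnected h.right_connected.preconnected
    h1 h2 hadj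
  rw [hAB] at this
  exact (induceUnivIso H).connected_iff.1 this

end IsThetaModel

namespace ThetaModelsSpan

lemma mem_or_mem (hspan : ThetaModelsSpan H c) (h : IsThetaModel H c A B E) (x : W) :
    x ∈ A ∨ x ∈ B :=
  (hspan A B E h).symm.subset (mem_univ x)

lemma exists_walk_to_edge (hspan : ThetaModelsSpan H c) (h : IsThetaModel H c A B E)
    (hv : v ∈ A) {x : W} (hx : x ∈ A \ {v}) :
    ∃ e ∈ E, ∃ p : H.Walk x e.1, ∀ z ∈ p.support, z ∈ A \ {v} := by
  by_contra hxE
  -- the union of the components of `A - v` containing no endpoint of an edge of `E`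
  set C := {y | y ∈ A \ {v} ∧ ¬ ∃ e ∈ E, ∃ p : H.Walk y e.1, ∀ z ∈ p.support, z ∈ A \ {v}}
  have hvC : v ∉ C := fun hvC => hvC.1.2 rfl
  have hclosed : ∀ y ∈ C, ∀ z ∈ A, H.Adj y z → z ∈ C ∨ z = v := by
    rintro y ⟨hy, hyE⟩ z hz hyz
    by_contra! hzCv
    obtain ⟨e, he, p, hp⟩ := not_not.1 fun hzE => hzCv.1 ⟨⟨hz, hzCv.2⟩, hzE⟩
    refine hyE ⟨e, he, p.cons hyz, ?_⟩
    simp only [Walk.support_cons, List.mem_cons, forall_eq_or_imp]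
    exact ⟨hy, hp⟩
  have hsmaller : IsThetaModel H c (A \ C) B E :=
    { left_nonempty := ⟨v, hv, hvC⟩
      right_nonempty := h.right_nonempty
      disjoint := h.disjoint.mono_left sdiff_subset
      left_connected := induce_diff_connected_of_adj_mem_or_eq h.left_connected hv hvC hclosed
      right_connected := h.right_connected
      card_edges := h.card_edges
      mem_edges := fun e he => by
        obtain ⟨h1, h2, hadj⟩ := h.mem_edges e he
        exact ⟨⟨h1, fun hC => hC.2 ⟨e, he, .nil, by simpa using hC.1⟩⟩, h2, hadj⟩ }
  rcases hspan.mem_or_mem hsmaller x with hxA | hxB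
  · exact hxA.2 ⟨hx, hxE⟩
  · exact h.disjoint.notMem_of_mem_left hx.1 hxB

lemma connected_induce_compl_of_mem_left (hspan : ThetaModelsSpan H c)
    (h : IsThetaModel H c A B E) (hv : v ∈ A) : (H.induce {v}ᶜ).Connected := by
  obtain ⟨b, hb⟩ := h.right_nonempty
  have hBv : B ⊆ {v}ᶜ := fun y hy hyv => h.disjoint.notMem_of_mem_left (hyv ▸ hv) hy
  have reachB : ∀ y (hy : y ∈ B), (H.induce {v}ᶜ).Reachable ⟨y, hBv hy⟩ ⟨b, hBv hb⟩ :=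
    fun y hy => (h.right_connected.preconnected ⟨y, hy⟩ ⟨b, hb⟩).map (induceHomOfLE H hBv).toHom
  refine (connected_iff_exists_forall_reachable _).2 ⟨⟨b, hBv hb⟩, fun ⟨x, hx⟩ => .symm ?_⟩
  rcases hspan.mem_or_mem h x with hxA | hxB
  · obtain ⟨e, he, p, hp⟩ := hspan.exists_walk_to_edge h hv ⟨hxA, hx⟩
    obtain ⟨-, h2, hadj⟩ := h.mem_edges e he
    have toEdge := (p.induce {v}ᶜ fun z hz => (hp z hz).2).reachable
    exact (toEdge.trans (Adj.reachable (induce_adj.2 hadj))).trans (reachB _ h2)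
  · exact reachB x hxB

lemma connected_induce_compl (hspan : ThetaModelsSpan H c) (h : IsThetaModel H c A B E)
    (v : W) : (H.induce {v}ᶜ).Connected := by
  rcases hspan.mem_or_mem h v with hvA | hvB
  · exact hspan.connected_induce_compl_of_mem_left h hvA
  · exact hspan.connected_induce_compl_of_mem_left h.symm hvB

end ThetaModelsSpan

end

lemma IsMinimalThetaModel.thetaModelsSpan {V : Type} {G : SimpleGraph V} {c : ℕ}
    {M : G.Subgraph} (hM : IsMinimalThetaModel G c M) : ThetaModelsSpan M.coe c := by
  intro A B E h
  by_contra hAB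
  have hS : Subtype.val '' (A ∪ B) ⊆ M.verts := image_subset_iff.2 fun x _ => x.2
  have hrange : range (M.induceEmbedding hS) = A ∪ B := by
    rw [M.range_induceEmbedding, preimage_image_eq _ Subtype.val_injective]
  have hlt : M.induce (Subtype.val '' (A ∪ B)) < M := by
    refine lt_of_le_of_ne ((M.induce_mono_right hS).trans_eq M.induce_self_verts) fun hM => hAB ?_
    have hverts : Subtype.val '' (A ∪ B) = M.verts := congrArg Subgraph.verts hM
    rw [← hrange, M.range_induceEmbedding, hverts, Subtype.coe_preimage_self]
  exact hM.2 _ hlt (h.comap _ (subset_union_left.trans hrange.ge)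
    (subset_union_right.trans hrange.ge))

/-- A minimal θ_c minor-model (c ≥ 2) is connected and has no cut vertex. -/
theorem minimal_theta_model_two_connected {V : Type} (G : SimpleGraph V) (c : ℕ) (hc : 2 ≤ c)
    (M : G.Subgraph) (hM : IsMinimalThetaModel G c M) :
    M.Connected ∧ ∀ v ∈ M.verts, ((M.deleteVerts {v}).coe).Connected := by
  obtain ⟨A, B, E, hθ⟩ := hasThetaMinor_iff.1 hM.1
  have hspan := hM.thetaModelsSpan
  refine ⟨⟨hθ.connected_of_union_eq_univ (hspan A B E hθ) (by omega)⟩, fun v hv => ?_⟩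
  have hS : M.verts \ {v} ⊆ M.verts := sdiff_subset
  have hrange : range (M.induceEmbedding hS) = {⟨v, hv⟩}ᶜ := by
    ext x
    simp [M.range_induceEmbedding, Subtype.ext_iff]
  refine (M.induceEmbedding hS).isoInduceRange.connected_iff.2 ?_
  rw [hrange]
  exact hspan.connected_induce_compl hθ _
end

section
/- Let G be a graph excluding K_{1,t} as an induced subgraph, let S ⊆ V(G), and suppose the treewidth of G \ S is at most d. Then |N(S)| ≤ (t−1)(d+1)·|S|, where N(S) is the set of vertices outside S with a neighbor in S. -/
/-- `G` has treewidth at most `d`. -/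
def TreewidthLE {V : Type} (G : SimpleGraph V) (d : ℕ) : Prop :=
  ∃ (ι : Type) (T : SimpleGraph ι) (bag : ι → Set V),
    T.Connected ∧ T.IsAcyclic ∧
    (∀ v, ∃ i, v ∈ bag i) ∧
    (∀ u v, G.Adj u v → ∃ i, u ∈ bag i ∧ v ∈ bag i) ∧
    (∀ v : V, (T.induce {i | v ∈ bag i}).Connected) ∧
    ∀ i, (bag i).ncard ≤ d + 1

/-- `G` has no induced subgraph isomorphic to the star `K_{1,t}`. -/
def NoInducedStar {V : Type} (G : SimpleGraph V) (t : ℕ) : Prop :=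
  ¬ ∃ (v : V) (s : Finset V), s.card = t ∧ v ∉ s ∧ (∀ u ∈ s, G.Adj v u) ∧
      ∀ u ∈ s, ∀ w ∈ s, u ≠ w → ¬ G.Adj u w

/-! Summing over `u ∈ S`, it suffices that `u` has at most `(t - 1)(d + 1)` neighbours outside
`S`. Those neighbours contain no independent set of size `t` (it would be the leaves of an
induced `K_{1,t}`), and in a graph of treewidth `d` every vertex set with independence number at
most `α` has at most `(d + 1)α` vertices: there is always a vertex whose remaining neighbours
lie in a single bag, so deleting it together with that bag lowers the independence number. -/

open SimpleGraph Walk Set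

namespace SimpleGraph

variable {ι : Type*} {T : SimpleGraph ι}

lemma Walk.IsPath.append {a b c : ι} {P : T.Walk a b} {Q : T.Walk b c} (hP : P.IsPath)
    (hQ : Q.IsPath) (h : ∀ y ∈ P.support, y ∈ Q.support → y = b) : (P.append Q).IsPath := by
  have hQsupp := hQ.support_nodup
  rw [← Q.cons_tail_support] at hQsupp
  rw [isPath_def, support_append]
  refine hP.support_nodup.append (List.nodup_cons.mp hQsupp).2 fun y hyP hyQ => ?_
  obtain rfl := h y hyP (List.mem_of_mem_tail hyQ)
  exact (List.nodup_cons.mp hQsupp).1 hyQ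

namespace IsAcyclic

lemma eq_of_isPath (ha : T.IsAcyclic) {a b : ι} {P Q : T.Walk a b} (hP : P.IsPath)
    (hQ : Q.IsPath) : P = Q :=
  congrArg Subtype.val (@Subsingleton.elim _ (ha.subsingleton_path a b) ⟨P, hP⟩ ⟨Q, hQ⟩)

lemma length_eq_dist_of_isPath (ha : T.IsAcyclic) {a b : ι} {P : T.Walk a b}
    (hP : P.IsPath) : P.length = T.dist a b := by
  obtain ⟨Q, hQ, hlen⟩ := P.reachable.exists_path_of_dist
  rwa [ha.eq_of_isPath hP hQ]

lemma dist_eq_add_of_mem_support (ha : T.IsAcyclic) {a b z : ι} {P : T.Walk a b}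
    (hP : P.IsPath) (hz : z ∈ P.support) : T.dist a b = T.dist a z + T.dist z b := by
  classical
  rw [← ha.length_eq_dist_of_isPath hP, ← ha.length_eq_dist_of_isPath (hP.takeUntil hz),
    ← ha.length_eq_dist_of_isPath (hP.dropUntil hz), ← length_append, take_spec]

lemma support_subset_of_preconnected_induce (ha : T.IsAcyclic) {C : Set ι}
    (hC : (T.induce C).Preconnected) {a b : ι} (haC : a ∈ C) (hbC : b ∈ C) {P : T.Walk a b}
    (hP : P.IsPath) : ∀ z ∈ P.support, z ∈ C := by
  classical
  obtain ⟨W⟩ := hC ⟨a, haC⟩ ⟨b, hbC⟩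
  let W' := W.map (Embedding.induce C).toHom
  rw [ha.eq_of_isPath hP W'.bypass_isPath]
  intro z hz
  have hzW : z ∈ W.support.map (Embedding.induce C).toHom :=
    Walk.support_map _ _ ▸ W'.support_bypass_subset_support hz
  obtain ⟨⟨y, hy⟩, -, rfl⟩ := List.mem_map.mp hzW
  exact hy

lemma mem_support_of_isMinOn (ha : T.IsAcyclic) {C : Set ι} (hC : (T.induce C).Preconnected)
    {r p x : ι} (hp : p ∈ C) (hmin : IsMinOn (T.dist r) C p) (hx : x ∈ C) {R : T.Walk r x}
    (hR : R.IsPath) : p ∈ R.support := by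
  classical
  have hpx : T.Reachable p x := (hC ⟨p, hp⟩ ⟨x, hx⟩).map (Embedding.induce C).toHom
  obtain ⟨Q, hQ, -⟩ := hpx.exists_path_of_dist
  obtain ⟨P, hP, -⟩ := (R.reachable.trans Q.reachable.symm).exists_path_of_dist
  have hPQ : (P.append Q).IsPath := hP.append hQ fun y hyP hyQ => by
    have hsplit := ha.dist_eq_add_of_mem_support hP hyP
    have hyC := ha.support_subset_of_preconnected_induce hC hp hx hQ y hyQ
    have hle := isMinOn_iff.mp hmin y hyC
    exact (P.dropUntil y hyP).reachable.dist_eq_zero_iff.mp (by omega)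
  rw [ha.eq_of_isPath hR hPQ, mem_support_append_iff]
  exact Or.inl P.end_mem_support

lemma mem_of_isMinOn_of_dist_le (ha : T.IsAcyclic) (hT : T.Preconnected) {Cu Cv : Set ι}
    (hCu : (T.induce Cu).Preconnected) (hCv : (T.induce Cv).Preconnected) {r pu pv j : ι}
    (hpu : pu ∈ Cu) (hminu : IsMinOn (T.dist r) Cu pu)
    (hpv : pv ∈ Cv) (hminv : IsMinOn (T.dist r) Cv pv)
    (hju : j ∈ Cu) (hjv : j ∈ Cv) (hle : T.dist r pu ≤ T.dist r pv) : pv ∈ Cu := by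
  classical
  obtain ⟨R, hR, -⟩ := (hT r j).exists_path_of_dist
  have hu := ha.mem_support_of_isMinOn hCu hpu hminu hju hR
  have hv := ha.mem_support_of_isMinOn hCv hpv hminv hjv hR
  rw [← R.take_spec hu, mem_support_append_iff] at hv
  rcases hv with hv | hv
  · have hsplit := ha.dist_eq_add_of_mem_support (hR.takeUntil hu) hv
    obtain rfl : pv = pu :=
      ((R.takeUntil pu hu).dropUntil pv hv).reachable.dist_eq_zero_iff.mp (by omega)
    exact hpu
  · exact ha.support_subset_of_preconnected_induce hCu hpu hju (hR.dropUntil hu) pv hv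

end IsAcyclic

end SimpleGraph

namespace TreewidthLE

variable {W : Type} [Finite W] {H : SimpleGraph W} {d : ℕ}

/-- Root the decomposition tree at `r` and take the `v ∈ A` whose bag nearest to `r` is farthest
from `r`. A neighbour `u` shares a bag with `v`, so the subtrees of bags containing `u` and `v`
meet, and then the bag of `v` nearest to `r` also contains `u`. -/
lemma exists_neighbors_subset (h : TreewidthLE H d) {A : Set W} (hne : A.Nonempty) :
    ∃ v ∈ A, ∃ B : Set W, B.ncard ≤ d + 1 ∧ v ∈ B ∧ ∀ u ∈ A, H.Adj v u → u ∈ B := by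
  obtain ⟨ι, T, bag, hc, ha, hcov, hedge, hsub, hbag⟩ := h
  obtain ⟨r⟩ := hc.nonempty
  let gate : W → ι := fun v => Function.argminOn (T.dist r) {i | v ∈ bag i} (hcov v)
  have hgate_mem (v : W) : v ∈ bag (gate v) :=
    Function.argminOn_mem (T.dist r) {i | v ∈ bag i} (hcov v)
  have hgate_min (v : W) : IsMinOn (T.dist r) {i | v ∈ bag i} (gate v) :=
    isMinOn_iff.mpr fun _ hi => Function.argminOn_le _ _ hi
  obtain ⟨v, hvA, hvmax⟩ := A.exists_max_image (fun v => T.dist r (gate v)) A.toFinite hne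
  refine ⟨v, hvA, bag (gate v), hbag _, hgate_mem v, fun u hu huv => ?_⟩
  obtain ⟨j, hvj, huj⟩ := hedge v u huv
  exact ha.mem_of_isMinOn_of_dist_le hc.preconnected (hsub u).preconnected
    (hsub v).preconnected (hgate_mem u) (hgate_min u) (hgate_mem v) (hgate_min v) huj hvj
    (hvmax u hu)

lemma ncard_le_of_forall_isIndepSet (h : TreewidthLE H d) {α : ℕ} {A : Set W}
    (hα : ∀ s : Finset W, ↑s ⊆ A → H.IsIndepSet ↑s → s.card ≤ α) :
    A.ncard ≤ (d + 1) * α := by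
  classical
  induction α generalizing A with
  | zero =>
    obtain rfl : A = ∅ := eq_empty_of_forall_notMem fun v hv => by
      simpa using hα {v} (by simpa using hv) (by simp)
    simp
  | succ k ih =>
    rcases A.eq_empty_or_nonempty with rfl | hne
    · simp
    obtain ⟨v, hvA, B, hB, hvB, hnbr⟩ := h.exists_neighbors_subset hne
    have hrest : (A \ B).ncard ≤ (d + 1) * k := ih fun s hs hind => by
      have hvs : v ∉ s := fun hv => (hs hv).2 hvB
      have hnadj (u : W) (hu : u ∈ s) : ¬H.Adj v u := fun hvu => (hs hu).2 (hnbr u (hs hu).1 hvu)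
      have hins_sub : ↑(insert v s) ⊆ A := by
        rw [Finset.coe_insert]
        exact insert_subset hvA (hs.trans sdiff_subset)
      have hins_ind : H.IsIndepSet ↑(insert v s) := by
        rw [Finset.coe_insert]
        exact hind.insert fun u hu _ => ⟨hnadj u hu, fun huv => hnadj u hu huv.symm⟩
      have hins := hα _ hins_sub hins_ind
      rwa [Finset.card_insert_of_notMem hvs, Nat.add_le_add_iff_right] at hins
    calc A.ncard = ((A \ B) ∪ (A ∩ B)).ncard := by rw [sdiff_union_inter]
      _ ≤ (A \ B).ncard + (A ∩ B).ncard := ncard_union_le _ _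
      _ ≤ (d + 1) * k + (d + 1) :=
        add_le_add hrest ((ncard_le_ncard inter_subset_right).trans hB)
      _ = (d + 1) * (k + 1) := by ring

end TreewidthLE

lemma NoInducedStar.card_lt_of_isIndepSet {V : Type} {G : SimpleGraph V} {t : ℕ}
    (h : NoInducedStar G t) {v : V} {s : Finset V} (hadj : ∀ u ∈ s, G.Adj v u)
    (hind : G.IsIndepSet ↑s) : s.card < t := by
  by_contra! hts
  obtain ⟨s₀, hs₀, rfl⟩ := Finset.exists_subset_card_eq hts
  exact h ⟨v, s₀, rfl, fun hv => G.irrefl (hadj v (hs₀ hv)), fun u hu => hadj u (hs₀ hu),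
    fun u hu w hw huw => hind (hs₀ hu) (hs₀ hw) huw⟩

lemma ncard_neighborSet_diff_le {V : Type} [Finite V] {G : SimpleGraph V} {d t : ℕ}
    {S : Set V} (hstar : NoInducedStar G t) (htw : TreewidthLE (G.induce Sᶜ) d) (u : V) :
    (G.neighborSet u \ S).ncard ≤ (t - 1) * (d + 1) := by
  have himage : G.neighborSet u \ S = Subtype.val '' {x : ↥Sᶜ | G.Adj u x} := by
    ext v
    simp [and_comm]
  rw [himage, ncard_image_of_injective _ Subtype.val_injective, mul_comm]
  refine htw.ncard_le_of_forall_isIndepSet fun s hs hind => ?_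
  have := hstar.card_lt_of_isIndepSet (s := s.map (Function.Embedding.subtype _))
    (fun w hw => by obtain ⟨x, hx, rfl⟩ := Finset.mem_map.mp hw; exact hs hx) (by
      rintro _ hx _ hy hxy
      simp only [Finset.coe_map, Function.Embedding.coe_subtype, mem_image] at hx hy
      obtain ⟨x, hx, rfl⟩ := hx
      obtain ⟨y, hy, rfl⟩ := hy
      exact hind hx hy (ne_of_apply_ne _ hxy))
  rw [Finset.card_map] at this
  omega

/-- If `G` is `K_{1,t}`-induced-subgraph-free and `tw(G \ S) ≤ d`, then
`|N(S)| ≤ (t-1)(d+1)|S|`. -/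
theorem star_free_neighborhood_bound {V : Type} [Fintype V] (G : SimpleGraph V)
    (d t : ℕ) (S : Set V)
    (hstar : NoInducedStar G t)
    (htw : TreewidthLE (G.induce Sᶜ) d) :
    {v : V | v ∉ S ∧ ∃ u ∈ S, G.Adj u v}.ncard ≤ (t - 1) * (d + 1) * S.ncard := by
  classical
  have hcover :
      {v : V | v ∉ S ∧ ∃ u ∈ S, G.Adj u v} = ⋃ u ∈ S.toFinset, G.neighborSet u \ S := by
    ext v
    simp [and_comm]
  calc {v : V | v ∉ S ∧ ∃ u ∈ S, G.Adj u v}.ncard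
      ≤ ∑ u ∈ S.toFinset, (G.neighborSet u \ S).ncard :=
        hcover ▸ Finset.set_ncard_biUnion_le _ _
    _ ≤ ∑ _u ∈ S.toFinset, (t - 1) * (d + 1) :=
        Finset.sum_le_sum fun u _ => ncard_neighborSet_diff_le hstar htw u
    _ = (t - 1) * (d + 1) * S.ncard := by
        rw [Finset.sum_const, smul_eq_mul, ncard_eq_toFinset_card', mul_comm]
end

section
/- Let T be a rooted tree and let g : V(T) → ℕ be a good labeling function: g(t) = 0 at base nodes (leaves of base type), g(s) ≤ g(t) ≤ g(s) + 1 at nodes t with a single child s (the value is preserved or increases by at most 1), and g(t) = g(s₁) + g(s₂) at nodes t with two children s₁, s₂. Let r be the root and suppose g(r) = k > 0. Then there exists a unique node t with g(t) > 2k/3 such that every child t' of t satisfies g(t') ≤ 2k/3. -/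
/-- On a rooted tree (given by a parent function) with at most two children per node
and a good labeling function `g` with `g(root) = k > 0`, there is a unique node `t`
with `g(t) > 2k/3` all of whose children `t'` satisfy `g(t') ≤ 2k/3`. -/
theorem good_labeling_splitter {V : Type} [Fintype V] [DecidableEq V]
    (r : V) (par : V → V) (g : V → ℕ) (k : ℕ)
    (hroot : par r = r)
    (hreach : ∀ v, ∃ n, par^[n] v = r)
    (Ch : V → Set V) (hCh : ∀ v, Ch v = {u | par u = v ∧ u ≠ v})
    (hbin : ∀ v, (Ch v).ncard ≤ 2)
    (hleaf : ∀ v, Ch v = ∅ → g v = 0)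
    (hunary : ∀ v u, Ch v = {u} → g v = g u ∨ g v = g u + 1)
    (hbinary : ∀ v u w, u ≠ w → Ch v = {u, w} → g v = g u + g w)
    (hk : g r = k) (hkpos : 0 < k) :
    ∃! t : V, 2 * k < 3 * g t ∧ ∀ u ∈ Ch t, 3 * g u ≤ 2 * k := by
  classical
  -- decompositions of iterates
  have it1 : ∀ (n : ℕ) (x : V), 1 ≤ n → par^[n] x = par (par^[n-1] x) := by
    intro n x h
    conv_lhs => rw [show n = (n-1)+1 by omega]
    rw [Function.iterate_succ_apply']
  have it2 : ∀ (n : ℕ) (x : V), 1 ≤ n → par^[n] x = par^[n-1] (par x) := by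
    intro n x h
    conv_lhs => rw [show n = (n-1)+1 by omega]
    rw [Function.iterate_succ_apply]
  -- children have smaller or equal labels
  have childle : ∀ v u, u ∈ Ch v → g u ≤ g v := by
    intro v u hu
    have hfin : (Ch v).Finite := Set.toFinite _
    have hub := hbin v
    have hpos : 1 ≤ (Ch v).ncard := by
      rw [Nat.one_le_iff_ne_zero]
      intro h0
      have := (Set.ncard_eq_zero hfin).mp h0
      rw [this] at hu; exact hu
    interval_cases h : (Ch v).ncard
    · obtain ⟨a, ha⟩ := (Set.ncard_eq_one).mp h
      rw [ha] at hu
      rcases hunary v a ha with h1 | h1 <;> simp_all <;> omega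
    · obtain ⟨a, b, hab, hset⟩ := (Set.ncard_eq_two).mp h
      have := hbinary v a b hab hset
      rw [hset] at hu
      rcases hu with rfl | rfl <;> omega
  have step : ∀ u, g u ≤ g (par u) := by
    intro u
    by_cases h : par u = u
    · rw [h]
    · exact childle (par u) u (by rw [hCh]; exact ⟨rfl, fun e => h e.symm⟩)
  have iterle : ∀ n u, g u ≤ g (par^[n] u) := by
    intro n
    induction n with
    | zero => intro u; simp
    | succ n ih =>
      intro u
      rw [Function.iterate_succ_apply']
      exact le_trans (ih u) (step _)
  have glek : ∀ v, g v ≤ k := by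
    intro v
    obtain ⟨n, hn⟩ := hreach v
    have := iterle n v
    rw [hn, hk] at this; exact this
  -- members of Ch
  have chmem : ∀ v u, u ∈ Ch v → par u = v ∧ u ≠ v := by
    intro v u hu; rw [hCh] at hu; exact hu
  -- ancestor helper
  have anc : ∀ a b, a ≠ b → (∃ n, par^[n] a = b) → ∃ c ∈ Ch b, g a ≤ g c := by
    intro a b hne hex
    have hspec : par^[Nat.find hex] a = b := Nat.find_spec hex
    set n := Nat.find hex with hn
    have hn1 : 1 ≤ n := by
      rcases Nat.eq_zero_or_pos n with h0 | h
      · exfalso; rw [h0] at hspec; exact hne hspec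
      · exact h
    refine ⟨par^[n-1] a, ?_, iterle _ _⟩
    rw [hCh]
    constructor
    · rw [← it1 n a hn1]; exact hspec
    · intro heq
      exact Nat.find_min hex (m := n - 1) (by omega) heq
  -- existence
  set S : Finset V := Finset.univ.filter (fun v => 2 * k < 3 * g v) with hS
  have hrS : r ∈ S := by
    simp [hS, hk]; omega
  obtain ⟨t, htS, htmax⟩ := S.exists_max_image (fun v => Nat.find (hreach v)) ⟨r, hrS⟩
  have htP : 2 * k < 3 * g t := by simpa [hS] using htS
  have htchild : ∀ u ∈ Ch t, 3 * g u ≤ 2 * k := by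
    intro u hu
    by_contra hgt
    push_neg at hgt
    obtain ⟨hpar, hne⟩ := chmem t u hu
    have huS : u ∈ S := by simp [hS]; omega
    have hle := htmax u huS
    have hur : u ≠ r := by
      intro h
      apply hne
      rw [← hpar, h, hroot]
    have hdu : 1 ≤ Nat.find (hreach u) := by
      rcases Nat.eq_zero_or_pos (Nat.find (hreach u)) with h0 | h
      · exfalso
        have := Nat.find_spec (hreach u)
        rw [h0] at this
        exact hur this
      · exact h
    have hdt : Nat.find (hreach t) ≤ Nat.find (hreach u) - 1 := by
      apply Nat.find_min'
      have hs := Nat.find_spec (hreach u)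
      rw [it2 _ _ hdu, hpar] at hs
      exact hs
    omega
  refine ⟨t, ⟨htP, htchild⟩, ?_⟩
  -- uniqueness
  intro y ⟨hyP, hychild⟩
  by_contra hne
  by_cases h1 : ∃ n, par^[n] y = t
  · obtain ⟨c, hc, hgc⟩ := anc y t hne h1
    have := htchild c hc
    omega
  by_cases h2 : ∃ n, par^[n] t = y
  · obtain ⟨c, hc, hgc⟩ := anc t y (Ne.symm hne) h2
    have := hychild c hc
    omega
  -- meet case: least common ancestor
  have hP : ∃ n, ∃ m, par^[m] y = par^[n] t := by
    obtain ⟨n, hn⟩ := hreach t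
    obtain ⟨m, hm⟩ := hreach y
    exact ⟨n, m, by rw [hn, hm]⟩
  obtain hPspec : ∃ m, par^[m] y = par^[Nat.find hP] t := Nat.find_spec hP
  set n₁ := Nat.find hP with hn₁
  set M := par^[n₁] t with hM
  have hMspec : par^[Nat.find hPspec] y = M := Nat.find_spec hPspec
  set n₂ := Nat.find hPspec with hn₂
  have hn₁1 : 1 ≤ n₁ := by
    rcases Nat.eq_zero_or_pos n₁ with h0 | h
    · exfalso
      apply h1
      obtain ⟨m, hm⟩ := hPspec
      rw [hM, h0] at hm
      exact ⟨m, by simpa using hm⟩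
    · exact h
  have hn₂1 : 1 ≤ n₂ := by
    rcases Nat.eq_zero_or_pos n₂ with h0 | h
    · exfalso
      apply h2
      rw [h0] at hMspec
      simp at hMspec
      exact ⟨n₁, hMspec.symm⟩
    · exact h
  set u := par^[n₁-1] t with hu
  set w := par^[n₂-1] y with hw
  have hpu : par u = M := by rw [hu, hM, it1 _ _ hn₁1]
  have hpw : par w = M := by rw [hw, ← hMspec, it1 _ _ hn₂1]
  have huM : u ≠ M := by
    intro heq
    refine Nat.find_min hP (m := n₁ - 1) (by omega) ?_
    obtain ⟨m, hm⟩ := hPspec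
    refine ⟨m, ?_⟩
    rw [hm, ← heq]
  have hwM : w ≠ M := by
    intro heq
    refine Nat.find_min hPspec (m := n₂ - 1) (by omega) ?_
    rw [← hw, heq, hM]
  have huw : u ≠ w := by
    intro heq
    refine Nat.find_min hP (m := n₁ - 1) (by omega) ?_
    exact ⟨n₂ - 1, by rw [← hw, ← heq]⟩
  have hsub : ({u, w} : Set V) ⊆ Ch M := by
    intro x hx
    rw [hCh]
    simp only [Set.mem_insert_iff, Set.mem_singleton_iff] at hx
    rcases hx with rfl | rfl
    · exact ⟨hpu, huM⟩
    · exact ⟨hpw, hwM⟩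
  have hcard : ({u, w} : Set V).ncard = 2 := Set.ncard_pair huw
  have heq : ({u, w} : Set V) = Ch M := by
    exact Set.eq_of_subset_of_ncard_le hsub (by rw [hcard]; exact hbin M) (Set.toFinite _)
  have hgM : g M = g u + g w := hbinary M u w huw heq.symm
  have hgt1 : g t ≤ g u := iterle (n₁ - 1) t
  have hgt2 : g y ≤ g w := iterle (n₂ - 1) y
  have hMk : g M ≤ k := glek M
  omega
end

section
/- Let G be a graph, k a nonnegative integer, and v ∈ V(G) a vertex through which there is a (k+1)-flower of θ_c minor-models (k+1 minor-models of θ_c pairwise sharing only the vertex v). Then G has a θ_c-hitting set of size at most k if and only if G \ {v} has a θ_c-hitting set of size at most k−1. -/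
open Function

theorem HasThetaMinor.map {V W : Type} {G : SimpleGraph V} {H : SimpleGraph W} {c : ℕ}
    (f : G →g H) (hf : Injective f) (h : HasThetaMinor G c) : HasThetaMinor H c := by
  obtain ⟨A, B, hA, hB, hAB, hcA, hcB, E, hE, hEmem⟩ := h
  have connected_image : ∀ X : Set V, (G.induce X).Connected → (H.induce (f '' X)).Connected :=
    fun X hX => hX.map (G := G.induce X)
      ⟨fun a => ⟨f a, a, a.2, rfl⟩, fun hab => f.map_rel hab⟩
      (by rintro ⟨_, a, ha, rfl⟩; exact ⟨⟨a, ha⟩, rfl⟩)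
  refine ⟨f '' A, f '' B, hA.image f, hB.image f, (Set.disjoint_image_iff hf).mpr hAB,
    connected_image A hcA, connected_image B hcB, E.map ⟨Prod.map f f, hf.prodMap hf⟩,
    by rw [Finset.card_map, hE], ?_⟩
  simp only [Finset.mem_map, Embedding.coeFn_mk, forall_exists_index, and_imp]
  rintro _ ⟨a, b⟩ hab rfl
  obtain ⟨ha, hb, hadj⟩ := hEmem _ hab
  exact ⟨Set.mem_image_of_mem f ha, Set.mem_image_of_mem f hb, f.map_rel hadj⟩

theorem HasThetaMinor.induce_of_verts_subset {V : Type} {G : SimpleGraph V} {H : G.Subgraph}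
    {X : Set V} {c : ℕ} (hX : H.verts ⊆ X) (h : HasThetaMinor H.coe c) :
    HasThetaMinor (G.induce X) c :=
  h.map (G := H.coe) ⟨fun x => ⟨x.1, hX x.2⟩, fun hab => hab.adj_sub⟩
    fun _ _ hxy => Subtype.ext (Subtype.mk.inj hxy)

theorem exists_mem_verts_of_not_hasThetaMinor_induce_compl {V : Type} {G : SimpleGraph V}
    {H : G.Subgraph} {S : Set V} {c : ℕ} (hS : ¬HasThetaMinor (G.induce Sᶜ) c)
    (hH : HasThetaMinor H.coe c) : ∃ s ∈ S, s ∈ H.verts := by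
  by_contra! hdisj
  exact hS (hH.induce_of_verts_subset fun x hx hxS => hdisj x hxS hx)

theorem Finset.card_le_of_forall_meet_petals {α ι : Type} [Fintype ι] {P : ι → Set α} {v : α}
    {S : Finset α} (hP : Pairwise fun i j => P i ∩ P j ⊆ {v}) (hvS : v ∉ S)
    (hmeet : ∀ i, ∃ s ∈ S, s ∈ P i) : Fintype.card ι ≤ S.card := by
  choose s hsS hsP using hmeet
  have hs : Injective s := by
    intro i j hij
    by_contra hne
    have hv : s i = v := hP hne ⟨hsP i, hij ▸ hsP j⟩
    exact hvS (hv ▸ hsS i)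
  simpa only [Finset.card_univ] using
    Finset.card_le_card_of_injOn (s := Finset.univ) s (fun i _ => hsS i) hs.injOn

theorem flower_rule_general {V : Type} [DecidableEq V] (G : SimpleGraph V) (c k : ℕ) (v : V)
    (M : Fin (k + 1) → G.Subgraph)
    (hmm : ∀ i, HasThetaMinor (M i).coe c)
    (hflower : ∀ i j, i ≠ j → (M i).verts ∩ (M j).verts = {v}) :
    (∃ S : Finset V, S.card ≤ k ∧ ¬ HasThetaMinor (G.induce ((↑S : Set V)ᶜ)) c) ↔
    (∃ S' : Finset V, v ∉ S' ∧ (S'.card : ℤ) ≤ (k : ℤ) - 1 ∧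
      ¬ HasThetaMinor (G.induce ((↑(insert v S') : Set V)ᶜ)) c) := by
  constructor
  · rintro ⟨S, hS, hhit⟩
    have hvS : v ∈ S := by
      by_contra hvS
      have := Finset.card_le_of_forall_meet_petals (P := fun i => (M i).verts)
        (fun i j hij => (hflower i j hij).le) hvS
        fun i => exists_mem_verts_of_not_hasThetaMinor_induce_compl hhit (hmm i)
      simp only [Fintype.card_fin] at this
      omega
    refine ⟨S.erase v, S.notMem_erase v, ?_, by rwa [Finset.insert_erase hvS]⟩
    have := Finset.card_erase_add_one hvS
    omega
  · rintro ⟨S', hvS', hcard, hhit⟩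
    refine ⟨insert v S', ?_, hhit⟩
    have := Finset.card_insert_of_notMem hvS'
    omega

/-- Soundness of the Flower Rule: if a `(k+1)`-flower of θ_c minor-models passes
through `v`, then `G` has a θ_c-hitting set of size at most `k` iff `G \ {v}` has a
θ_c-hitting set of size at most `k - 1`. -/
theorem flower_rule {V : Type} [DecidableEq V] (G : SimpleGraph V) (c k : ℕ) (v : V)
    (M : Fin (k + 1) → G.Subgraph)
    (hmm : ∀ i, HasThetaMinor (M i).coe c)
    (hv : ∀ i, v ∈ (M i).verts)
    (hflower : ∀ i j, i ≠ j → (M i).verts ∩ (M j).verts = {v}) :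
    (∃ S : Finset V, S.card ≤ k ∧ ¬ HasThetaMinor (G.induce ((↑S : Set V)ᶜ)) c) ↔
    (∃ S' : Finset V, v ∉ S' ∧ (S'.card : ℤ) ≤ (k : ℤ) - 1 ∧
      ¬ HasThetaMinor (G.induce ((↑(insert v S') : Set V)ᶜ)) c) :=
  flower_rule_general G c k v M hmm hflower
end

section
/- Let c ≥ 2, let G be a graph, v ∈ V(G), and H ⊆ V(G) \ {v} a set hitting all θ_c minor-models of G. Let C be a connected component of G \ (H ∪ {v}) such that no vertex of C has a neighbor in H. Then no vertex of C belongs to any minimal θ_c minor-model of G. -/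
/-- `C` is a connected component of the subgraph of `G` induced on `W`. -/
def IsCompOf {V : Type} (G : SimpleGraph V) (W C : Set V) : Prop :=
  C ⊆ W ∧ C.Nonempty ∧ (G.induce C).Connected ∧
    ∀ C', C ⊆ C' → C' ⊆ W → (G.induce C').Connected → C' = C

open SimpleGraph Set

variable {V : Type}

namespace SimpleGraph

lemma connected_induce_iff_exists_walk (Γ : SimpleGraph V) (S : Set V) :
    (Γ.induce S).Connected ↔
      S.Nonempty ∧ ∀ x ∈ S, ∀ y ∈ S, ∃ p : Γ.Walk x y, ∀ z ∈ p.support, z ∈ S := by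
  rw [connected_induce_iff, Subgraph.connected_iff_forall_exists_walk_subgraph]
  constructor
  · rintro ⟨hne, hw⟩
    refine ⟨by simpa using hne, fun x hx y hy => ?_⟩
    obtain ⟨p, hp⟩ := hw (by simpa using hx) (by simpa using hy)
    exact ⟨p, fun z hz => by simpa using hp.1 (p.mem_verts_toSubgraph.2 hz)⟩
  · rintro ⟨hne, hw⟩
    refine ⟨by simpa using hne, fun {x y} hx hy => ?_⟩
    obtain ⟨p, hp⟩ := hw x (by simpa using hx) y (by simpa using hy)
    refine ⟨p, ⟨fun z hz => by simpa using hp z (p.mem_verts_toSubgraph.1 hz), ?_⟩⟩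
    intro a b hab
    exact ⟨hp a (p.mem_verts_toSubgraph.1 hab.fst_mem),
      hp b (p.mem_verts_toSubgraph.1 hab.snd_mem), p.toSubgraph.adj_sub hab⟩

lemma subset_of_connected_induce {Γ : SimpleGraph V} {S T : Set V}
    (hS : (Γ.induce S).Connected) (hT : ∀ a ∈ S ∩ T, ∀ b ∈ S, Γ.Adj a b → b ∈ T)
    (hST : (S ∩ T).Nonempty) : S ⊆ T := by
  obtain ⟨x, hxS, hxT⟩ := hST
  intro y hyS
  by_contra hyT
  obtain ⟨p, hp⟩ := ((connected_induce_iff_exists_walk Γ S).1 hS).2 x hxS y hyS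
  obtain ⟨d, hd, hd₁, hd₂⟩ := p.exists_boundary_dart T hxT hyT
  exact hd₂ (hT _ ⟨hp _ (p.dart_fst_mem_support_of_mem_darts hd), hd₁⟩ _
    (hp _ (p.dart_snd_mem_support_of_mem_darts hd)) d.adj)

lemma exists_walk_of_adj_closed {Γ : SimpleGraph V} {S T : Set V} {v : V}
    (hT : ∀ a ∈ T, a ≠ v → ∀ b ∈ S, Γ.Adj a b → b ∈ T) {x : V} (p : Γ.Walk x v)
    (hp : ∀ z ∈ p.support, z ∈ S) (hx : x ∈ T) :
    ∃ q : Γ.Walk x v, ∀ z ∈ q.support, z ∈ T := by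
  revert hT
  induction p with
  | nil => exact fun _ => ⟨Walk.nil, by simpa using hx⟩
  | @cons a b w hab p ih =>
    intro hT
    by_cases haw : a = w
    · subst haw
      exact ⟨Walk.nil, by simpa using hx⟩
    · have hbS : b ∈ S := hp b (by simp)
      obtain ⟨q, hq⟩ := ih (fun z hz => hp z (by simp [hz])) (hT a hx haw b hbS hab) hT
      exact ⟨Walk.cons hab q, by simpa [hx] using hq⟩

lemma connected_induce_of_adj_closed {Γ : SimpleGraph V} {S T : Set V} {v : V}
    (hS : (Γ.induce S).Connected) (hvT : v ∈ T) (hTS : T ⊆ S)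
    (hT : ∀ a ∈ T, a ≠ v → ∀ b ∈ S, Γ.Adj a b → b ∈ T) : (Γ.induce T).Connected := by
  refine induce_connected_of_patches v hvT fun {x} hx => ?_
  obtain ⟨p, hp⟩ := ((connected_induce_iff_exists_walk Γ S).1 hS).2 x (hTS hx) v (hTS hvT)
  obtain ⟨q, hq⟩ := exists_walk_of_adj_closed hT p hp hx
  exact ⟨{z | z ∈ q.support}, hq, q.end_mem_support, q.start_mem_support,
    q.connected_induce_support.preconnected _ _⟩

end SimpleGraph

lemma IsCompOf.mem_of_adj {G : SimpleGraph V} {W C : Set V} (hC : IsCompOf G W C) {x y : V}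
    (hx : x ∈ C) (hy : y ∈ W) (hxy : G.Adj x y) : y ∈ C := by
  obtain ⟨hCW, -, hCconn, hCmax⟩ := hC
  have hCxy : C ∪ {x, y} = C :=
    hCmax _ subset_union_left (union_subset hCW (insert_subset (hCW hx) (singleton_subset_iff.2 hy)))
      (induce_union_connected hCconn.preconnected (induce_pair_connected_of_adj hxy).preconnected
        ⟨x, hx, mem_insert _ _⟩)
  exact hCxy ▸ Or.inr (Or.inr rfl)

section Separation

variable {Γ : SimpleGraph V} {C S : Set V} {v : V}

lemma subset_or_disjoint_of_notMem (hsep : ∀ x ∈ C, ∀ y, Γ.Adj x y → y ∈ insert v C)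
    (hS : (Γ.induce S).Connected) (hvS : v ∉ S) : S ⊆ C ∨ Disjoint S C := by
  by_cases hSC : (S ∩ C).Nonempty
  · refine Or.inl (subset_of_connected_induce hS (fun a ha b hb hab => ?_) hSC)
    exact (hsep a ha.2 b hab).resolve_left fun hbv => hvS (hbv ▸ hb)
  · exact Or.inr (disjoint_iff_inter_eq_empty.2 (not_nonempty_iff_eq_empty.1 hSC))

lemma connected_induce_inter_insert (hsep : ∀ x ∈ C, ∀ y, Γ.Adj x y → y ∈ insert v C)
    (hS : (Γ.induce S).Connected) (hne : (S ∩ insert v C).Nonempty) :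
    (Γ.induce (S ∩ insert v C)).Connected := by
  by_cases hvS : v ∈ S
  · refine connected_induce_of_adj_closed hS ⟨hvS, mem_insert _ _⟩ inter_subset_left
      fun a ha hav b hb hab => ⟨hb, ?_⟩
    exact hsep a (ha.2.resolve_left hav) b hab
  rcases subset_or_disjoint_of_notMem hsep hS hvS with hSC | hSC
  · rwa [inter_eq_left.2 (hSC.trans (subset_insert _ _))]
  · obtain ⟨x, hxS, hxv | hxC⟩ := hne
    · exact absurd (hxv ▸ hxS) hvS
    · exact absurd hxC (hSC.notMem_of_mem_left hxS)

lemma connected_induce_diff (hsep : ∀ x ∈ C, ∀ y, Γ.Adj x y → y ∈ insert v C) (hvC : v ∉ C)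
    (hS : (Γ.induce S).Connected) (hne : (S \ C).Nonempty) : (Γ.induce (S \ C)).Connected := by
  by_cases hvS : v ∈ S
  · refine connected_induce_of_adj_closed hS ⟨hvS, hvC⟩ sdiff_subset
      fun a ha hav b hb hab => ⟨hb, fun hbC => ?_⟩
    exact (hsep b hbC a hab.symm).elim hav ha.2
  rcases subset_or_disjoint_of_notMem hsep hS hvS with hSC | hSC
  · exact absurd (sdiff_eq_empty.2 hSC) hne.ne_empty
  · rwa [hSC.sdiff_eq_left]

end Separation

def IsThetaBranchSets (Γ : SimpleGraph V) (c : ℕ) (A B : Set V) : Prop :=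
  A.Nonempty ∧ B.Nonempty ∧ Disjoint A B ∧ (Γ.induce A).Connected ∧ (Γ.induce B).Connected ∧
    ∃ E : Finset (V × V), E.card = c ∧ ∀ e ∈ E, e.1 ∈ A ∧ e.2 ∈ B ∧ Γ.Adj e.1 e.2

namespace IsThetaBranchSets

variable {Γ : SimpleGraph V} {c : ℕ} {A B : Set V}

lemma symm (h : IsThetaBranchSets Γ c A B) : IsThetaBranchSets Γ c B A := by
  obtain ⟨hA, hB, hAB, cA, cB, E, hE, hEAB⟩ := h
  refine ⟨hB, hA, hAB.symm, cB, cA, E.map ⟨Prod.swap, Prod.swap_injective⟩,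
    by rw [Finset.card_map, hE], ?_⟩
  simp only [Finset.mem_map, Function.Embedding.coeFn_mk, forall_exists_index, and_imp]
  rintro _ e he rfl
  obtain ⟨heA, heB, hadj⟩ := hEAB e he
  exact ⟨heB, heA, hadj.symm⟩

lemma mono {Γ' : SimpleGraph V} (h : IsThetaBranchSets Γ c A B) (hΓ : Γ ≤ Γ') :
    IsThetaBranchSets Γ' c A B := by
  obtain ⟨hA, hB, hAB, cA, cB, E, hE, hEAB⟩ := h
  exact ⟨hA, hB, hAB, cA.mono (comap_monotone _ hΓ), cB.mono (comap_monotone _ hΓ), E, hE,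
    fun e he => ⟨(hEAB e he).1, (hEAB e he).2.1, hΓ (hEAB e he).2.2⟩⟩

/-- The `A`–`B` edges, which lie in `T`, witness that both cut sets are nonempty. -/
lemma restrict {T : Set V} (h : IsThetaBranchSets Γ c A B) (hc : 0 < c)
    (hT : ∀ a ∈ A, ∀ b ∈ B, Γ.Adj a b → a ∈ T ∧ b ∈ T)
    (hAT : (A ∩ T).Nonempty → (Γ.induce (A ∩ T)).Connected)
    (hBT : (B ∩ T).Nonempty → (Γ.induce (B ∩ T)).Connected) :
    IsThetaBranchSets Γ c (A ∩ T) (B ∩ T) := by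
  obtain ⟨-, -, hAB, -, -, E, hE, hEAB⟩ := h
  have hET : ∀ e ∈ E, e.1 ∈ A ∩ T ∧ e.2 ∈ B ∩ T ∧ Γ.Adj e.1 e.2 := fun e he =>
    have ⟨heA, heB, hadj⟩ := hEAB e he
    ⟨⟨heA, (hT _ heA _ heB hadj).1⟩, ⟨heB, (hT _ heA _ heB hadj).2⟩, hadj⟩
  obtain ⟨e, he⟩ := Finset.card_pos.1 (hE ▸ hc)
  have hAT' : (A ∩ T).Nonempty := ⟨_, (hET e he).1⟩
  have hBT' : (B ∩ T).Nonempty := ⟨_, (hET e he).2.1⟩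
  exact ⟨hAT', hBT', hAB.mono inter_subset_left inter_subset_left, hAT hAT', hBT hBT', E, hE, hET⟩

lemma inter_insert_or_diff {C : Set V} {v : V}
    (hsep : ∀ x ∈ C, ∀ y, Γ.Adj x y → y ∈ insert v C) (hvC : v ∉ C) (hc : 0 < c)
    (h : IsThetaBranchSets Γ c A B) :
    IsThetaBranchSets Γ c (A ∩ insert v C) (B ∩ insert v C) ∨
      IsThetaBranchSets Γ c (A \ C) (B \ C) := by
  wlog hvB : v ∉ B generalizing A B
  · have hvA : v ∉ A := fun hvA => h.2.2.1.notMem_of_mem_left hvA (not_not.1 hvB)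
    exact (this h.symm hvA).imp symm symm
  have ⟨_, _, _, cA, cB, _⟩ := h
  rcases subset_or_disjoint_of_notMem hsep cB hvB with hBC | hBC
  · refine Or.inl (h.restrict hc (fun a _ b hb hab => ⟨hsep b (hBC hb) a hab.symm, ?_⟩)
      (connected_induce_inter_insert hsep cA) (connected_induce_inter_insert hsep cB))
    exact mem_insert_of_mem _ (hBC hb)
  · refine Or.inr (h.restrict hc (fun a _ b hb hab => ⟨fun haC => ?_, hBC.notMem_of_mem_left hb⟩)
      (connected_induce_diff hsep hvC cA) (connected_induce_diff hsep hvC cB))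
    rcases hsep a haC b hab with rfl | hbC
    · exact hvB hb
    · exact hBC.notMem_of_mem_left hb hbC

end IsThetaBranchSets

noncomputable def induceInduceIso (Γ : SimpleGraph V) (s : Set V) (A : Set s) :
    (Γ.induce s).induce A ≃g Γ.induce (Subtype.val '' A) where
  toEquiv := Equiv.Set.image Subtype.val A Subtype.val_injective
  map_rel_iff' := Iff.rfl

lemma hasThetaMinor_induce_iff (Γ : SimpleGraph V) (s : Set V) (c : ℕ) :
    HasThetaMinor (Γ.induce s) c ↔ ∃ A B, A ⊆ s ∧ B ⊆ s ∧ IsThetaBranchSets Γ c A B := by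
  constructor
  · rintro ⟨A, B, hA, hB, hAB, cA, cB, E, hE, hEAB⟩
    refine ⟨_, _, Subtype.coe_image_subset s A, Subtype.coe_image_subset s B, hA.image _,
      hB.image _, (disjoint_image_iff Subtype.val_injective).2 hAB,
      (induceInduceIso Γ s A).connected_iff.1 cA, (induceInduceIso Γ s B).connected_iff.1 cB,
      E.map ⟨Prod.map Subtype.val Subtype.val, Subtype.val_injective.prodMap Subtype.val_injective⟩,
      by rw [Finset.card_map, hE], ?_⟩
    simp only [Finset.mem_map, Function.Embedding.coeFn_mk, forall_exists_index, and_imp]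
    rintro _ e he rfl
    obtain ⟨heA, heB, hadj⟩ := hEAB e he
    exact ⟨mem_image_of_mem _ heA, mem_image_of_mem _ heB, hadj⟩
  · rintro ⟨A, B, hAs, hBs, hA, hB, hAB, cA, cB, E, hE, hEAB⟩
    have himage : ∀ {X : Set V}, X ⊆ s → Subtype.val '' (Subtype.val ⁻¹' X : Set s) = X :=
      fun hXs => by rw [Subtype.image_preimage_coe, inter_eq_right.2 hXs]
    have hEs : ∀ e ∈ E, e ∈ range (Prod.map (Subtype.val : s → V) Subtype.val) := fun e he =>
      ⟨(⟨e.1, hAs (hEAB e he).1⟩, ⟨e.2, hBs (hEAB e he).2.1⟩), rfl⟩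
    classical
    obtain ⟨a, ha⟩ := hA
    obtain ⟨b, hb⟩ := hB
    refine ⟨_, _, ⟨⟨a, hAs ha⟩, ha⟩, ⟨⟨b, hBs hb⟩, hb⟩, hAB.preimage _,
      (induceInduceIso Γ s _).connected_iff.2 (by rwa [himage hAs]),
      (induceInduceIso Γ s _).connected_iff.2 (by rwa [himage hBs]),
      E.preimage _ (Subtype.val_injective.prodMap Subtype.val_injective).injOn, ?_, ?_⟩
    · rw [Finset.card_preimage, Finset.filter_true_of_mem hEs, hE]
    · intro e he
      exact hEAB _ (Finset.mem_preimage.1 he)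

lemma Subgraph.coe_induce_eq {G : SimpleGraph V} (M : G.Subgraph) (s : Set V) :
    (M.induce s).coe = M.spanningCoe.induce s := by
  ext ⟨a, ha⟩ ⟨b, hb⟩
  exact ⟨fun h => h.2.2, fun h => ⟨ha, hb, h⟩⟩

lemma Subgraph.induce_lt {G : SimpleGraph V} {M : G.Subgraph} {s : Set V} (hs : s ⊂ M.verts) :
    M.induce s < M := by
  refine lt_of_le_of_ne ((Subgraph.induce_mono_right hs.1).trans_eq Subgraph.induce_self_verts)
    fun h => hs.ne (congrArg Subgraph.verts h)

/-- If `H` hits all θ_c minor-models of `G`, `v ∉ H`, and `C` is a component of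
`G \ (H ∪ {v})` with no neighbor in `H`, then no vertex of `C` lies in any minimal
θ_c minor-model of `G`. -/
theorem irrelevant_component {V : Type} (G : SimpleGraph V) (c : ℕ) (hc : 2 ≤ c)
    (v : V) (H : Set V) (hvH : v ∉ H)
    (hhit : ¬ HasThetaMinor (G.induce Hᶜ) c)
    (C : Set V) (hC : IsCompOf G ((H ∪ {v})ᶜ) C)
    (hnoadj : ∀ u ∈ C, ∀ w ∈ H, ¬ G.Adj u w) :
    ∀ u ∈ C, ∀ M : G.Subgraph, IsMinimalThetaModel G c M → u ∉ M.verts := by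
  intro u hu M ⟨hM, hmin⟩ huM
  have hCW : C ⊆ (H ∪ {v})ᶜ := hC.1
  have hvC : v ∉ C := fun hvC => hCW hvC (Or.inr rfl)
  have hsep : ∀ x ∈ C, ∀ y, G.Adj x y → y ∈ insert v C := by
    intro x hx y hxy
    by_cases hyv : y = v
    · exact Or.inl hyv
    · exact Or.inr (hC.mem_of_adj hx (fun h => h.elim (hnoadj x hx y · hxy) hyv) hxy)
  obtain ⟨A, B, hAM, hBM, hAB⟩ := (hasThetaMinor_induce_iff M.spanningCoe M.verts c).1 hM
  rcases hAB.inter_insert_or_diff (fun x hx y hxy => hsep x hx y (M.adj_sub hxy)) hvC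
    (by omega) with hin | hout
  · have hCv : insert v C ⊆ Hᶜ := insert_subset hvH fun x hx hxH => hCW hx (Or.inl hxH)
    exact hhit ((hasThetaMinor_induce_iff G Hᶜ c).2 ⟨_, _, inter_subset_right.trans hCv,
      inter_subset_right.trans hCv, hin.mono M.spanningCoe_le⟩)
  · refine hmin _ (Subgraph.induce_lt ⟨sdiff_subset, fun h => (h huM).2 hu⟩) ?_
    rw [Subgraph.coe_induce_eq]
    exact (hasThetaMinor_induce_iff _ _ c).2
      ⟨_, _, sdiff_subset_sdiff_left hAM, sdiff_subset_sdiff_left hBM, hout⟩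
end

section
/- Let G be a graph, v ∈ V(G), and H ⊆ V(G) \ {v} a set hitting all θ_c minor-models of G. Then v has at most c−1 neighbors in any single connected component of G \ H; consequently if v has at most c parallel edges to each vertex of H, then deg(v) ≤ c·|H| + (c−1)·r, where r is the number of components of G \ H containing a neighbor of v. -/
/-!
If `v ∉ H` had `c` neighbours in a component `C` of `G - (H ∪ {v})`, then the branch sets `{v}`
and `C`, joined by those `c` edges, would be a θ_c model in `G - H`. So each component of
`G - (H ∪ {v})` meets `N(v)` in at most `c - 1` vertices, and every other neighbour of `v`
lies in `H`.
-/

open SimpleGraph Set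

variable {V : Type}

theorem Set.ncard_biUnion_le_ncard_mul {ι α : Type*} {t : Set ι} (ht : t.Finite) (s : ι → Set α)
    {k : ℕ} (hk : ∀ i ∈ t, (s i).ncard ≤ k) : (⋃ i ∈ t, s i).ncard ≤ t.ncard * k := by
  rw [ncard_eq_toFinset_card t ht]
  calc (⋃ i ∈ t, s i).ncard = (⋃ i ∈ ht.toFinset, s i).ncard := by simp only [Finite.mem_toFinset]
    _ ≤ ∑ i ∈ ht.toFinset, (s i).ncard := ht.toFinset.set_ncard_biUnion_le s
    _ ≤ ht.toFinset.card * k :=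
      Finset.sum_le_card_nsmul _ _ _ fun i hi => hk i (ht.mem_toFinset.1 hi)

namespace SimpleGraph

theorem connected_induce_induce_preimage_val {G : SimpleGraph V} {W C : Set V} (hCW : C ⊆ W)
    (hC : (G.induce C).Connected) :
    ((G.induce W).induce (Subtype.val ⁻¹' C : Set W)).Connected :=
  let f : G.induce C →g (G.induce W).induce (Subtype.val ⁻¹' C : Set W) :=
    { toFun := fun u => ⟨⟨u, hCW u.2⟩, u.2⟩, map_rel' := id }
  hC.map f fun u => ⟨⟨u.1.1, u.2⟩, rfl⟩

theorem connected_induce_singleton (G : SimpleGraph V) (v : V) : (G.induce {v}).Connected := by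
  rw [induce_singleton_eq_top]
  exact connected_top

theorem exists_isCompOf_mem [Finite V] (G : SimpleGraph V) {W : Set V} {u : V} (hu : u ∈ W) :
    ∃ C, IsCompOf G W C ∧ u ∈ C := by
  obtain ⟨C, huC, ⟨hCW, hC⟩, hmax⟩ := exists_maximal_ge_of_wellFoundedGT
    (fun C => C ⊆ W ∧ (G.induce C).Connected) {u}
    ⟨singleton_subset_iff.2 hu, G.connected_induce_singleton u⟩
  exact ⟨C, ⟨hCW, singleton_nonempty u |>.mono huC, hC,
    fun C' hCC' hC'W hC' => (hmax ⟨hC'W, hC'⟩ hCC').antisymm hCC'⟩, huC rfl⟩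

theorem hasThetaMinor_card_of_subset_neighborSet_inter {G : SimpleGraph V} {v : V} {C : Set V}
    (hC : (G.induce C).Connected) (hvC : v ∉ C) (s : Finset V)
    (hs : ↑s ⊆ G.neighborSet v ∩ C) : HasThetaMinor G s.card := by
  classical
  refine ⟨{v}, C, singleton_nonempty v, nonempty_coe_sort.1 hC.nonempty,
    disjoint_singleton_left.2 hvC, G.connected_induce_singleton v, hC, s.image (v, ·),
    s.card_image_of_injective (Prod.mk_right_injective v), ?_⟩
  simp only [Finset.mem_image]
  rintro _ ⟨u, hu, rfl⟩
  exact ⟨rfl, (hs hu).2, (hs hu).1⟩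

theorem ncard_neighborSet_inter_lt_of_not_hasThetaMinor [Finite V] {G : SimpleGraph V}
    {W C : Set V} {v : V} {c : ℕ} (hhit : ¬HasThetaMinor (G.induce W) c) (hv : v ∈ W)
    (hCW : C ⊆ W) (hvC : v ∉ C) (hC : (G.induce C).Connected) :
    (G.neighborSet v ∩ C).ncard < c := by
  by_contra! hle
  set N : Set W := (G.induce W).neighborSet ⟨v, hv⟩ ∩ Subtype.val ⁻¹' C
  have hN : N.ncard = (G.neighborSet v ∩ C).ncard :=
    ncard_preimage_of_injective_subset_range (s := G.neighborSet v ∩ C) Subtype.val_injective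
      (Subtype.range_coe.symm ▸ inter_subset_right.trans hCW)
  obtain ⟨s, hsN, rfl⟩ := Finset.exists_subset_card_eq
    (hle.trans_eq (hN.symm.trans (ncard_eq_toFinset_card N)))
  exact hhit (hasThetaMinor_card_of_subset_neighborSet_inter
    (connected_induce_induce_preimage_val hCW hC) hvC s
    (Finite.subset_toFinset.1 hsN))

theorem ncard_neighborSet_le_of_forall_isCompOf [Finite V] (G : SimpleGraph V) (v : V)
    (H : Set V) {k : ℕ}
    (hk : ∀ C, IsCompOf G ((H ∪ {v})ᶜ) C → (G.neighborSet v ∩ C).ncard ≤ k) :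
    (G.neighborSet v).ncard ≤ H.ncard + k *
      {C : Set V | IsCompOf G ((H ∪ {v})ᶜ) C ∧ ∃ u ∈ C, G.Adj v u}.ncard := by
  set N := G.neighborSet v
  set S := {C : Set V | IsCompOf G ((H ∪ {v})ᶜ) C ∧ ∃ u ∈ C, G.Adj v u}
  have hcover : N ⊆ (N ∩ H) ∪ ⋃ C ∈ S, N ∩ C := by
    intro u (hu : G.Adj v u)
    by_cases huH : u ∈ H
    · exact .inl ⟨hu, huH⟩
    · have huW : u ∈ (H ∪ {v})ᶜ := by simp [huH, hu.ne']
      obtain ⟨C, hC, huC⟩ := G.exists_isCompOf_mem huW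
      exact .inr (mem_biUnion (x := C) ⟨hC, u, huC, hu⟩ ⟨hu, huC⟩)
  calc N.ncard ≤ ((N ∩ H) ∪ ⋃ C ∈ S, N ∩ C).ncard := ncard_le_ncard hcover
    _ ≤ (N ∩ H).ncard + (⋃ C ∈ S, N ∩ C).ncard := ncard_union_le _ _
    _ ≤ H.ncard + S.ncard * k := add_le_add (ncard_le_ncard inter_subset_right)
        (ncard_biUnion_le_ncard_mul (toFinite S) _ fun C hC => hk C hC.1)
    _ = H.ncard + k * S.ncard := by rw [mul_comm]

end SimpleGraph

/-- If `H` hits all θ_c minor-models of `G` and `v ∉ H`, then `v` has at most `c-1`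
neighbors in each component of `G \ (H ∪ {v})`, and hence
`deg(v) ≤ c·|H| + (c-1)·r` where `r` is the number of such components containing a
neighbor of `v`. -/
theorem degree_bound_via_hitting {V : Type} [Fintype V] (G : SimpleGraph V)
    (c : ℕ) (hc : 2 ≤ c) (v : V) (H : Set V) (hvH : v ∉ H)
    (hhit : ¬ HasThetaMinor (G.induce Hᶜ) c) :
    (∀ C : Set V, IsCompOf G ((H ∪ {v})ᶜ) C →
      (G.neighborSet v ∩ C).ncard ≤ c - 1) ∧
    (G.neighborSet v).ncard ≤ c * H.ncard + (c - 1) *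
      {C : Set V | IsCompOf G ((H ∪ {v})ᶜ) C ∧ ∃ u ∈ C, G.Adj v u}.ncard := by
  have hcomp : ∀ C : Set V, IsCompOf G ((H ∪ {v})ᶜ) C →
      (G.neighborSet v ∩ C).ncard ≤ c - 1 := by
    intro C ⟨hCW, _, hC, _⟩
    have hCH : C ⊆ Hᶜ := fun u hu huH => hCW hu (.inl huH)
    have hvC : v ∉ C := fun hv => hCW hv (.inr rfl)
    exact Nat.le_sub_one_of_lt <|
      ncard_neighborSet_inter_lt_of_not_hasThetaMinor hhit hvH hCH hvC hC
  refine ⟨hcomp, (G.ncard_neighborSet_le_of_forall_isCompOf v H hcomp).trans ?_⟩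
  gcongr
  exact Nat.le_mul_of_pos_left _ (by omega)
end
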